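/- arXiv:0905.0583 — 4 statements merged into one kernel-verified Lean document; each statement's English description precedes it below -/
import Mathlib

section
/- Let A be a unital C*-algebra, let k ≥ 1, and let g₁, …, g_k ∈ A be pairwise commuting elements with 0 ≤ gᵢ ≤ 1_A. In the C*-algebra M_k(A) of k×k matrices over A, the positive element diag(1_A − g₁g₂⋯g_k, 0, …, 0) is Cuntz subequivalent to the positive element diag(1_A − g₁, 1_A − g₂, …, 1_A − g_k). (This is the commuting-elements form of the Cuntz semigroup inequality [1 − d^{⊗k}] ≤ k·[(1 − d) ⊗ 1^{⊗(k−1)}] in W(D^{⊗k}) for a positive contraction d in a strongly self-absorbing C*-algebra D.) -/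
/-!
Let `qᵢ = g₀ ⋯ gᵢ₋₁` be the prefix products; they are positive because the `gᵢ` commute.
Conjugating `diag(1 - g₀, …, 1 - g_{k-1})` by the matrix whose first row is `(√q₀, …, √q_{k-1})`
and whose other rows vanish gives exactly `diag(∑ᵢ qᵢ (1 - gᵢ), 0, …, 0)`, and the sum telescopes
to `1 - g₀ ⋯ g_{k-1}`. So a constant sequence witnesses the subequivalence.
-/

/-- Cuntz subequivalence of positive elements: `a ≾ b` iff there is a sequence `(xₖ)` with
`xₖ * b * xₖ* → a`.  On `Matrix (Fin k) (Fin k) A` the topology (the product topology) coincides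
with the topology of the canonical C*-norm, so this is exactly the requirement
`‖xₖ * b * (xₖ)* - a‖ → 0`. -/
def CuntzSubequiv {C : Type*} [NonUnitalNonAssocSemiring C] [Star C] [TopologicalSpace C]
    (a b : C) : Prop :=
  ∃ x : ℕ → C, Filter.Tendsto (fun k => x k * b * star (x k)) Filter.atTop (nhds a)

theorem List.prod_nonneg_of_pairwise_commute {A : Type*} [CStarAlgebra A] [PartialOrder A]
    [StarOrderedRing A] {l : List A} (hl : l.Pairwise Commute) (h0 : ∀ a ∈ l, 0 ≤ a) :
    0 ≤ l.prod := by
  induction l with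
  | nil => simp
  | cons a l ih =>
    rw [List.pairwise_cons] at hl
    rw [List.prod_cons]
    exact (Commute.list_prod_right l a hl.1).mul_nonneg (h0 a (by simp))
      (ih hl.2 fun b hb => h0 b (by simp [hb]))

theorem List.sum_prod_take_ofFn_mul_one_sub {R : Type*} [Ring R] {k : ℕ} (g : Fin k → R) :
    ∑ i : Fin k, ((List.ofFn g).take i).prod * (1 - g i) = 1 - (List.ofFn g).prod := by
  set q : ℕ → R := fun n => ((List.ofFn g).take n).prod
  have hstep (i : Fin k) : q i * (1 - g i) = q i - q (i + 1) := by
    rw [mul_sub, mul_one]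
    simp only [q, List.prod_take_succ _ _ (by simp : (i : ℕ) < (List.ofFn g).length)]
    rw [List.getElem_ofFn]
  calc ∑ i : Fin k, q i * (1 - g i) = ∑ i : Fin k, (q i - q (i + 1)) :=
        Finset.sum_congr rfl fun i _ => hstep i
    _ = q 0 - q k := by
      rw [Fin.sum_univ_eq_sum_range (fun n => q n - q (n + 1)), Finset.sum_range_sub']
    _ = 1 - (List.ofFn g).prod := by simp [q, List.take_of_length_le]

theorem Finset.noncommProd_univ_fin_eq_prod_ofFn {M : Type*} [Monoid M] {k : ℕ} (g : Fin k → M)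
    (h : ∀ i j, Commute (g i) (g j)) :
    Finset.univ.noncommProd g (fun a _ b _ _ => h a b) = (List.ofFn g).prod := by
  simp_rw [Finset.noncommProd, Fin.univ_val_map, Multiset.noncommProd_coe]

section sqrt

variable {A : Type*} [CStarAlgebra A] [PartialOrder A] [StarOrderedRing A] {a b : A}

theorem Commute.cfcSqrt_left (h : Commute a b) : Commute (CFC.sqrt a) b :=
  CFC.sqrt_eq_cfc (a := a) ▸ h.cfc_nnreal _

theorem CFC.sqrt_mul_mul_sqrt_of_commute (ha : 0 ≤ a) (h : Commute a b) :
    CFC.sqrt a * b * CFC.sqrt a = a * b := by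
  rw [mul_assoc, ← h.cfcSqrt_left.eq, ← mul_assoc, CFC.sqrt_mul_sqrt_self a ha]

end sqrt

theorem Matrix.firstRow_mul_diagonal_mul_star {R : Type*} [Semiring R] [StarRing R] {k : ℕ}
    (s d : Fin k → R) :
    Matrix.of (fun i j : Fin k => if (i : ℕ) = 0 then s j else 0) * Matrix.diagonal d *
        star (Matrix.of (fun i j : Fin k => if (i : ℕ) = 0 then s j else 0)) =
      Matrix.diagonal (fun i : Fin k =>
        if (i : ℕ) = 0 then ∑ j, s j * d j * star (s j) else 0) := by
  ext i j
  by_cases hi : (i : ℕ) = 0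
  · by_cases hij : i = j
    · subst hij
      simp [Matrix.mul_apply, Matrix.diagonal_apply, hi]
    · have hj : (j : ℕ) ≠ 0 := fun hj => hij (Fin.ext (hi.trans hj.symm))
      simp [Matrix.mul_apply, Matrix.diagonal_apply_ne _ hij, hj]
  · simp [Matrix.mul_apply, Matrix.diagonal_apply, hi]

theorem stmt_1_general {A : Type*} [CStarAlgebra A] [PartialOrder A] [StarOrderedRing A]
    (k : ℕ) (g : Fin k → A)
    (hcomm : ∀ i j, Commute (g i) (g j))
    (hg0 : ∀ i, 0 ≤ g i) :
    CuntzSubequiv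
      (Matrix.diagonal (fun i : Fin k =>
        if (i : ℕ) = 0 then 1 - Finset.univ.noncommProd g (fun a _ b _ _ => hcomm a b) else 0))
      (Matrix.diagonal (fun i : Fin k => 1 - g i)) := by
  set q : ℕ → A := fun n => ((List.ofFn g).take n).prod
  have hq0 (n : ℕ) : 0 ≤ q n :=
    List.prod_nonneg_of_pairwise_commute (List.pairwise_ofFn.2 fun i j _ => hcomm i j).take
      fun a ha => by obtain ⟨i, rfl⟩ := List.mem_ofFn.1 (List.mem_of_mem_take ha); exact hg0 i
  have hqg (n : ℕ) (j : Fin k) : Commute (q n) (1 - g j) :=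
    (Commute.one_right _).sub_right <| Commute.list_prod_left _ _ fun a ha => by
      obtain ⟨i, rfl⟩ := List.mem_ofFn.1 (List.mem_of_mem_take ha); exact hcomm i j
  have hterm (j : Fin k) :
      CFC.sqrt (q j) * (1 - g j) * star (CFC.sqrt (q j)) = q j * (1 - g j) := by
    rw [(CFC.sqrt_nonneg _).isSelfAdjoint.star_eq,
      CFC.sqrt_mul_mul_sqrt_of_commute (hq0 j) (hqg j j)]
  refine ⟨fun _ => Matrix.of fun i j : Fin k => if (i : ℕ) = 0 then CFC.sqrt (q j) else 0, ?_⟩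
  simp only [Matrix.firstRow_mul_diagonal_mul_star, hterm, q,
    List.sum_prod_take_ofFn_mul_one_sub, Finset.noncommProd_univ_fin_eq_prod_ofFn]
  exact tendsto_const_nhds

theorem stmt_1 {A : Type*} [CStarAlgebra A] [PartialOrder A] [StarOrderedRing A]
    (k : ℕ) (hk : 1 ≤ k) (g : Fin k → A)
    (hcomm : ∀ i j, Commute (g i) (g j))
    (hg0 : ∀ i, 0 ≤ g i) (hg1 : ∀ i, g i ≤ 1) :
    CuntzSubequiv
      (Matrix.diagonal (fun i : Fin k =>
        if (i : ℕ) = 0 then 1 - Finset.univ.noncommProd g (fun a _ b _ _ => hcomm a b) else 0))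
      (Matrix.diagonal (fun i : Fin k => 1 - g i)) :=
  stmt_1_general k g hcomm hg0
end

section
/- Let A be a unital C*-algebra, let n ≥ 1, and let f₁, …, fₙ, g₁, …, gₙ ∈ A satisfy: 0 ≤ fᵢ ≤ gᵢ ≤ 1_A and fᵢgᵢ = fᵢ for each i, and for all i ≠ j each of fᵢ, gᵢ commutes with each of fⱼ, gⱼ. Put aᵢ := (1_A − gᵢ)·∏_{j≠i} fⱼ. Then each aᵢ is positive, the aᵢ are pairwise orthogonal (aᵢaⱼ = 0 for i ≠ j), and Σ_{i=1}^{n} aᵢ ≤ 1_A − g₁g₂⋯gₙ. (This is the key estimate in the proof of Lemma 1.3: with fᵢ, gᵢ the i-th elementary-tensor copies of f and g in D^{⊗n}, it yields [(1−g)⊗f⊗⋯⊗f] + ⋯ + [f⊗⋯⊗f⊗(1−g)] ≤ [1 − g^{⊗n}].) -/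
/-!
Commuting positive elements have positive product, so left multiplication by a positive `z` is
monotone on elements commuting with `z`. Hence `∏_{j ≠ i} fⱼ ≤ ∏_{j ∈ t} gⱼ` for every `t ∌ i`,
and `aᵢ ≤ (1 - gᵢ) ∏_{j ∈ t} gⱼ = ∏_{j ∈ t} gⱼ - ∏_{j ∈ t ∪ {i}} gⱼ`; adding the `aᵢ` one at a
time therefore telescopes to `1 - ∏ gⱼ`. For orthogonality, `aⱼ` contains the factor `fᵢ`, which
commutes to the left onto `1 - gᵢ`, and `(1 - gᵢ) fᵢ = 0` because `gᵢ fᵢ = (fᵢ gᵢ)* = fᵢ`.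
-/

open Function

namespace Commute

variable {A : Type*} [CStarAlgebra A] [PartialOrder A] [StarOrderedRing A]

lemma mul_le_mul_of_nonneg_left {x y z : A} (hxy : x ≤ y) (hz : 0 ≤ z)
    (hzx : Commute z x) (hzy : Commute z y) : z * x ≤ z * y := by
  have := (hzy.sub_right hzx).mul_nonneg hz (sub_nonneg.2 hxy)
  rwa [mul_sub, sub_nonneg] at this

end Commute

lemma one_sub_mul_eq_zero_of_mul_eq_self {R : Type*} [Ring R] [StarRing R] {f g : R}
    (hf : IsSelfAdjoint f) (hg : IsSelfAdjoint g) (h : f * g = f) : (1 - g) * f = 0 := by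
  have := congrArg star h
  rw [star_mul, hf.star_eq, hg.star_eq] at this
  rw [sub_mul, one_mul, this, sub_self]

namespace Finset

lemma commute_noncommProd_of_pairwise_cons {M ι : Type*} [Monoid M] {f g : ι → M}
    {s : Finset ι} {i : ι} (hi : i ∉ s)
    (comm : ((cons i s hi : Finset ι) : Set ι).Pairwise fun i j => Commute (f i) (g j))
    (commg : (s : Set ι).Pairwise (Commute on g)) :
    Commute (f i) (s.noncommProd g commg) :=
  noncommProd_commute _ _ _ _ fun _ hj =>
    comm (mem_cons_self i s) (mem_cons_of_mem hj) (ne_of_mem_of_not_mem hj hi).symm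

section CStarAlgebra

variable {A : Type*} [CStarAlgebra A] [PartialOrder A] [StarOrderedRing A]
  {ι : Type*} {f g : ι → A}

lemma noncommProd_nonneg (s : Finset ι) (comm : (s : Set ι).Pairwise (Commute on f))
    (hf : ∀ i ∈ s, 0 ≤ f i) : 0 ≤ s.noncommProd f comm := by
  induction s using Finset.cons_induction with
  | empty => simp
  | cons i s hi ih =>
    rw [noncommProd_cons]
    simp only [mem_cons, forall_eq_or_imp] at hf
    exact Commute.mul_nonneg hf.1 (ih _ hf.2) (commute_noncommProd_of_pairwise_cons hi comm _)

lemma noncommProd_le_one (s : Finset ι) (comm : (s : Set ι).Pairwise (Commute on f))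
    (hf0 : ∀ i ∈ s, 0 ≤ f i) (hf1 : ∀ i ∈ s, f i ≤ 1) : s.noncommProd f comm ≤ 1 := by
  induction s using Finset.cons_induction with
  | empty => simp
  | cons i s hi ih =>
    rw [noncommProd_cons]
    simp only [mem_cons, forall_eq_or_imp] at hf0 hf1
    calc f i * s.noncommProd f _ ≤ f i * 1 :=
          Commute.mul_le_mul_of_nonneg_left (ih _ hf0.2 hf1.2) hf0.1
            (commute_noncommProd_of_pairwise_cons hi comm _) (Commute.one_right _)
      _ = f i := mul_one _
      _ ≤ 1 := hf1.1

lemma noncommProd_le_noncommProd (s : Finset ι) (commf : (s : Set ι).Pairwise (Commute on f))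
    (commg : (s : Set ι).Pairwise (Commute on g))
    (commfg : (s : Set ι).Pairwise fun i j => Commute (f i) (g j))
    (hf0 : ∀ i ∈ s, 0 ≤ f i) (hfg : ∀ i ∈ s, f i ≤ g i) :
    s.noncommProd f commf ≤ s.noncommProd g commg := by
  induction s using Finset.cons_induction with
  | empty => simp
  | cons i s hi ih =>
    rw [noncommProd_cons, noncommProd_cons]
    simp only [mem_cons, forall_eq_or_imp] at hf0 hfg
    have hg0 : ∀ j ∈ s, 0 ≤ g j := fun j hj => (hf0.2 j hj).trans (hfg.2 j hj)
    have commg' : (s : Set ι).Pairwise (Commute on g) := commg.mono (by simp)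
    set Q := s.noncommProd g commg'
    have hQf : Commute Q (f i) := (commute_noncommProd_of_pairwise_cons hi commfg _).symm
    have hgQ : Commute (g i) Q := commute_noncommProd_of_pairwise_cons hi commg _
    calc f i * s.noncommProd f _ ≤ f i * Q :=
          Commute.mul_le_mul_of_nonneg_left (ih _ _ (commfg.mono (by simp)) hf0.2 hfg.2) hf0.1
            (commute_noncommProd_of_pairwise_cons hi commf _) hQf.symm
      _ = Q * f i := hQf.symm.eq
      _ ≤ Q * g i :=
          Commute.mul_le_mul_of_nonneg_left hfg.1 (noncommProd_nonneg s _ hg0) hQf hgQ.symm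
      _ = g i * Q := hgQ.eq.symm

lemma noncommProd_le_noncommProd_of_subset [DecidableEq ι] (hff : Pairwise (Commute on f))
    (hgg : Pairwise (Commute on g)) (hfg_comm : Pairwise fun i j => Commute (f i) (g j))
    (hf0 : ∀ i, 0 ≤ f i) (hfg : ∀ i, f i ≤ g i) (hf1 : ∀ i, f i ≤ 1) {s t : Finset ι}
    (hts : t ⊆ s) :
    s.noncommProd f (hff.set_pairwise _) ≤ t.noncommProd g (hgg.set_pairwise _) := by
  have hsplit : s.noncommProd f (hff.set_pairwise _) =
      t.noncommProd f (hff.set_pairwise _) * (s \ t).noncommProd f (hff.set_pairwise _) := by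
    convert noncommProd_union_of_disjoint disjoint_sdiff f (hff.set_pairwise _) using 2
    exact (union_sdiff_of_subset hts).symm
  have hcomm : Commute (t.noncommProd f (hff.set_pairwise _))
      ((s \ t).noncommProd f (hff.set_pairwise _)) :=
    noncommProd_commute _ _ _ _ fun x hx => (noncommProd_commute _ _ _ _ fun y hy =>
      hff (ne_of_mem_of_not_mem hy (mem_sdiff.1 hx).2).symm).symm
  calc s.noncommProd f _ = t.noncommProd f _ * (s \ t).noncommProd f _ := hsplit
    _ ≤ t.noncommProd f _ * 1 :=
        Commute.mul_le_mul_of_nonneg_left (noncommProd_le_one _ _ (fun i _ => hf0 i)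
          fun i _ => hf1 i) (noncommProd_nonneg _ _ fun i _ => hf0 i) hcomm (Commute.one_right _)
    _ = t.noncommProd f _ := mul_one _
    _ ≤ t.noncommProd g _ := noncommProd_le_noncommProd _ _ _ (hfg_comm.set_pairwise _)
        (fun i _ => hf0 i) fun i _ => hfg i

end CStarAlgebra

lemma sum_add_noncommProd_le_one {R ι : Type*} [Ring R] [PartialOrder R] [IsOrderedAddMonoid R]
    {a g : ι → R} (hg : Pairwise (Commute on g))
    (ha : ∀ i (t : Finset ι), i ∉ t → a i ≤ (1 - g i) * t.noncommProd g (hg.set_pairwise _))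
    (s : Finset ι) : ∑ i ∈ s, a i + s.noncommProd g (hg.set_pairwise _) ≤ 1 := by
  induction s using Finset.cons_induction with
  | empty => simp
  | cons i s hi ih =>
    rw [sum_cons, noncommProd_cons]
    set G := s.noncommProd g (hg.set_pairwise _)
    have hstep : a i + g i * G ≤ G := by
      have := ha i s hi
      rwa [sub_mul, one_mul, le_sub_iff_add_le] at this
    calc a i + ∑ j ∈ s, a j + g i * G = ∑ j ∈ s, a j + (a i + g i * G) := by abel
      _ ≤ ∑ j ∈ s, a j + G := by gcongr
      _ ≤ 1 := ih

lemma mul_noncommProd_erase_mul_mul_noncommProd_erase_eq_zero {M ι : Type*} [MonoidWithZero M]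
    [DecidableEq ι] {u f : ι → M} (hf : Pairwise (Commute on f))
    (huf : Pairwise fun i j => Commute (u i) (f j)) (hu : ∀ i, u i * f i = 0)
    {s : Finset ι} {i j : ι} (hi : i ∈ s) (hij : i ≠ j) :
    u i * (s.erase i).noncommProd f (hf.set_pairwise _) *
      (u j * (s.erase j).noncommProd f (hf.set_pairwise _)) = 0 := by
  have hPi : Commute ((s.erase i).noncommProd f (hf.set_pairwise _)) (f i) :=
    (noncommProd_commute _ _ _ _ fun k hk => hf (ne_of_mem_erase hk).symm).symm
  rw [← mul_noncommProd_erase (s.erase j) (mem_erase.2 ⟨hij, hi⟩) f, (huf hij.symm).left_comm,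
    mul_assoc, hPi.left_comm, ← mul_assoc, hu, zero_mul]

end Finset

theorem stmt_2_general {A : Type*} [CStarAlgebra A] [PartialOrder A] [StarOrderedRing A]
    (n : ℕ) (f g : Fin n → A)
    (hf0 : ∀ i, 0 ≤ f i) (hfg : ∀ i, f i ≤ g i) (hg1 : ∀ i, g i ≤ 1)
    (hfgeq : ∀ i, f i * g i = f i)
    (hcomm : ∀ i j, i ≠ j →
      Commute (f i) (f j) ∧ Commute (f i) (g j) ∧
      Commute (g i) (f j) ∧ Commute (g i) (g j))
    (a : Fin n → A)
    (ha : ∀ i, a i = (1 - g i) *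
      (Finset.univ.erase i).noncommProd f
        (fun p _ q _ hpq => (hcomm p q hpq).1)) :
    (∀ i, 0 ≤ a i) ∧
    (∀ i j, i ≠ j → a i * a j = 0) ∧
    ∑ i, a i ≤
      1 - Finset.univ.noncommProd g (fun p _ q _ hpq => (hcomm p q hpq).2.2.2) := by
  have hff : Pairwise (Commute on f) := fun i j h => (hcomm i j h).1
  have hgg : Pairwise (Commute on g) := fun i j h => (hcomm i j h).2.2.2
  have hfg_comm : Pairwise fun i j => Commute (f i) (g j) := fun i j h => (hcomm i j h).2.1
  have huf : Pairwise fun i j => Commute (1 - g i) (f j) :=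
    fun i j h => (Commute.one_left _).sub_left (hcomm i j h).2.2.1
  have hu0 : ∀ i, 0 ≤ 1 - g i := fun i => sub_nonneg.2 (hg1 i)
  have huP : ∀ i, Commute (1 - g i) ((Finset.univ.erase i).noncommProd f (hff.set_pairwise _)) :=
    fun i => Finset.noncommProd_commute _ _ _ _ fun j hj => huf (Finset.ne_of_mem_erase hj).symm
  have hgf : ∀ i, (1 - g i) * f i = 0 := fun i => one_sub_mul_eq_zero_of_mul_eq_self
    (hf0 i).isSelfAdjoint ((hf0 i).trans (hfg i)).isSelfAdjoint (hfgeq i)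
  have ha_le : ∀ i (t : Finset (Fin n)), i ∉ t →
      a i ≤ (1 - g i) * t.noncommProd g (hgg.set_pairwise _) := fun i t hi => by
    rw [ha i]
    exact Commute.mul_le_mul_of_nonneg_left
      (Finset.noncommProd_le_noncommProd_of_subset hff hgg hfg_comm hf0 hfg
        (fun i => (hfg i).trans (hg1 i)) (Finset.subset_erase.2 ⟨t.subset_univ, hi⟩))
      (hu0 i) (huP i) (Finset.noncommProd_commute _ _ _ _ fun j hj =>
        (Commute.one_left _).sub_left (hgg (ne_of_mem_of_not_mem hj hi).symm))
  refine ⟨fun i => ?_, fun i j hij => ?_,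
    le_sub_iff_add_le.2 (Finset.sum_add_noncommProd_le_one hgg ha_le _)⟩
  · rw [ha i]
    exact (huP i).mul_nonneg (hu0 i) (Finset.noncommProd_nonneg _ _ fun j _ => hf0 j)
  · rw [ha i, ha j]
    exact Finset.mul_noncommProd_erase_mul_mul_noncommProd_erase_eq_zero hff huf hgf
      (Finset.mem_univ i) hij

theorem stmt_2 {A : Type*} [CStarAlgebra A] [PartialOrder A] [StarOrderedRing A]
    (n : ℕ) (hn : 1 ≤ n) (f g : Fin n → A)
    (hf0 : ∀ i, 0 ≤ f i) (hfg : ∀ i, f i ≤ g i) (hg1 : ∀ i, g i ≤ 1)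
    (hfgeq : ∀ i, f i * g i = f i)
    (hcomm : ∀ i j, i ≠ j →
      Commute (f i) (f j) ∧ Commute (f i) (g j) ∧
      Commute (g i) (f j) ∧ Commute (g i) (g j))
    (a : Fin n → A)
    (ha : ∀ i, a i = (1 - g i) *
      (Finset.univ.erase i).noncommProd f
        (fun p _ q _ hpq => (hcomm p q hpq).1)) :
    (∀ i, 0 ≤ a i) ∧
    (∀ i j, i ≠ j → a i * a j = 0) ∧
    ∑ i, a i ≤
      1 - Finset.univ.noncommProd g (fun p _ q _ hpq => (hcomm p q hpq).2.2.2) :=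
  stmt_2_general n f g hf0 hfg hg1 hfgeq hcomm a ha
end

section
/- Let B be a unital C*-algebra and suppose there exists a unital *-homomorphism ρ : M₂(ℂ) → B. Let E be the C*-subalgebra of the C*-algebra C([0,1], M₂(B)) of continuous functions from [0,1] to the 2×2 matrices over B, consisting of those f such that f(0) lies in the image of the unital embedding B → M₂(B), b ↦ diag(b, b) (i.e., f(0) ∈ B ⊗ 1_{M₂}), and f(1) lies in the image of the unital embedding M₂(ℂ) → M₂(B) given by applying the unit of B entrywise to a scalar matrix (i.e., f(1) ∈ 1_B ⊗ M₂). Then there exists a unital *-homomorphism ρ̃ : M₂(ℂ) → E. -/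
/-!
View `Matrix n n B` as `Mₙ ⊗ B`. The image `U` of the tensor flip of `Mₙ ⊗ Mₙ` under `id ⊗ ρ`
is a symmetry (a selfadjoint unitary) conjugating `x ⊗ 1` to `1 ⊗ ρ x = diag (ρ x)`. A symmetry is
joined to `1` by an explicit path of unitaries `w`, namely `w t = 1 + (e^{iπ(1-t)} - 1) p` with
`p = (1 - U) / 2`. Then `x ↦ (t ↦ w t (x ⊗ 1) (w t)⋆)` is a unital ⋆-homomorphism into
`C([0,1], M₂(B))` which equals `diag (ρ x)` at `0` and `x ⊗ 1` at `1`.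
-/

open Matrix Real

namespace ContinuousMap

variable {X A : Type*} [TopologicalSpace X] [TopologicalSpace A]

def constStarAlgHom {R : Type*} [CommSemiring R] [Semiring A] [IsTopologicalSemiring A] [Star A]
    [ContinuousStar A] [Algebra R A] : A →⋆ₐ[R] C(X, A) where
  toFun := const X
  map_one' := rfl
  map_mul' _ _ := rfl
  map_zero' := rfl
  map_add' _ _ := rfl
  commutes' _ := rfl
  map_star' _ := rfl

theorem mem_unitary_iff [Monoid A] [ContinuousMul A] [StarMul A] [ContinuousStar A]
    {f : C(X, A)} : f ∈ unitary C(X, A) ↔ ∀ x, f x ∈ unitary A := by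
  simp [Unitary.mem_iff, ContinuousMap.ext_iff, forall_and]

end ContinuousMap

namespace StarAlgHom

def mapMatrix {R A B n : Type*} [Fintype n] [DecidableEq n] [CommSemiring R] [Semiring A] [Star A]
    [Algebra R A] [Semiring B] [Star B] [Algebra R B] (φ : A →⋆ₐ[R] B) :
    Matrix n n A →⋆ₐ[R] Matrix n n B :=
  { φ.toAlgHom.mapMatrix with
    map_star' := fun M => by
      simp only [star_eq_conjTranspose]
      exact conjTranspose_map φ (map_star φ) }

variable {X R S A : Type*} [TopologicalSpace X] [CommSemiring R] [Semiring S] [Star S]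
  [Algebra R S] [TopologicalSpace A] [Semiring A] [IsTopologicalSemiring A] [StarMul A]
  [ContinuousStar A] [Algebra R A]

def conjUnitaryPath (φ : S →⋆ₐ[R] A) (w : unitary C(X, A)) : S →⋆ₐ[R] C(X, A) :=
  (Unitary.conjStarAlgAut R C(X, A) w).toStarAlgHom.comp (ContinuousMap.constStarAlgHom.comp φ)

@[simp]
theorem conjUnitaryPath_apply (φ : S →⋆ₐ[R] A) (w : unitary C(X, A)) (s : S) (t : X) :
    φ.conjUnitaryPath w s t = (w : C(X, A)) t * φ s * star ((w : C(X, A)) t) :=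
  rfl

end StarAlgHom

section TensorFlip

variable {R B n : Type*} [Fintype n] [DecidableEq n] [CommSemiring R] [StarRing R]
  [Semiring B] [Star B] [Algebra R B]

/-- The image of the flip `a ⊗ b ↦ b ⊗ a` of `Mₙ ⊗ Mₙ` under `id ⊗ ρ : Mₙ ⊗ Mₙ → Mₙ ⊗ B`;
the flip is `∑ i j, Eᵢⱼ ⊗ Eⱼᵢ`. -/
def tensorFlip (ρ : Matrix n n R →⋆ₐ[R] B) : Matrix n n B :=
  of fun i j => ρ (single j i 1)

variable (ρ : Matrix n n R →⋆ₐ[R] B)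

theorem tensorFlip_mul_map_mul_tensorFlip (x : Matrix n n R) :
    tensorFlip ρ * x.map (algebraMap R B) * tensorFlip ρ = diagonal fun _ => ρ x := by
  ext i j
  have entry : ∀ k l, ρ (single k i 1) * algebraMap R B (x k l) * ρ (single j l 1)
      = ρ (x k l • (single k i 1 * single j l 1)) := by
    intro k l
    rw [map_smul, map_mul, Algebra.smul_def, ← Algebra.commutes, ← mul_assoc]
  simp only [tensorFlip, mul_apply, of_apply, map_apply, Finset.sum_mul, entry]
  rw [Finset.sum_comm]
  simp only [← map_sum]
  by_cases hij : i = j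
  · subst hij
    simp only [single_mul_single_same, smul_single, smul_eq_mul, mul_one,
      diagonal_apply_eq, ← matrix_eq_sum_single]
  · have hzero : ∀ k l, single k i (1 : R) * single j l 1 = 0 :=
      fun k _ => single_mul_single_of_ne 1 k i j hij 1
    simp only [hzero, smul_zero, Finset.sum_const_zero, map_zero, diagonal_apply_ne _ hij]

theorem tensorFlip_mul_self : tensorFlip ρ * tensorFlip ρ = 1 := by
  simpa using tensorFlip_mul_map_mul_tensorFlip ρ 1

theorem isSelfAdjoint_tensorFlip : IsSelfAdjoint (tensorFlip ρ) := by
  ext i j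
  simp [tensorFlip, star_apply, ← map_star, star_eq_conjTranspose]

end TensorFlip

theorem IsIdempotentElem.one_add_smul_mul_one_add_smul {R A : Type*} [CommRing R] [Ring A]
    [Algebra R A] {p : A} (hp : IsIdempotentElem p) (z w : R) :
    (1 + (z - 1) • p) * (1 + (w - 1) • p) = 1 + (z * w - 1) • p := by
  simp only [mul_add, add_mul, one_mul, mul_one, smul_mul_smul_comm, hp.eq]
  module

theorem IsStarProjection.one_add_smul_mem_unitary {R A : Type*} [CommRing R] [StarRing R]
    [Ring A] [StarRing A] [Algebra R A] [StarModule R A] {p : A} (hp : IsStarProjection p)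
    {z : R} (hz : z ∈ unitary R) : 1 + (z - 1) • p ∈ unitary A := by
  have star_eq : star (1 + (z - 1) • p) = 1 + (star z - 1) • p := by
    simp [star_smul, hp.isSelfAdjoint.star_eq]
  rw [Unitary.mem_iff, star_eq, hp.isIdempotentElem.one_add_smul_mul_one_add_smul,
    hp.isIdempotentElem.one_add_smul_mul_one_add_smul, Unitary.star_mul_self_of_mem hz,
    Unitary.mul_star_self_of_mem hz, sub_self, zero_smul, add_zero, and_self]

theorem IsSelfAdjoint.isStarProjection_half_smul_one_sub {𝕜 A : Type*} [Field 𝕜] [CharZero 𝕜]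
    [StarRing 𝕜] [Ring A] [StarRing A] [Algebra 𝕜 A] [StarModule 𝕜 A] {u : A}
    (hu : IsSelfAdjoint u) (hu2 : u * u = 1) : IsStarProjection ((2⁻¹ : 𝕜) • (1 - u)) where
  isIdempotentElem := by
    have : (1 - u) * (1 - u) = (2 : 𝕜) • (1 - u) := by
      simp only [mul_sub, sub_mul, hu2, one_mul, mul_one]
      module
    rw [IsIdempotentElem, smul_mul_smul_comm, this, smul_smul]
    norm_num
  isSelfAdjoint := by
    simp [IsSelfAdjoint, star_smul, hu.star_eq]

theorem Circle.coe_mem_unitary (z : Circle) : (z : ℂ) ∈ unitary ℂ := by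
  rw [Unitary.mem_iff_star_mul_self, Complex.star_def, ← Circle.coe_inv_eq_conj, ← Circle.coe_mul,
    inv_mul_cancel, Circle.coe_one]

section SymmetryPath

variable {A : Type*} [Ring A] [Algebra ℂ A] [TopologicalSpace A] [IsTopologicalRing A]
  [ContinuousSMul ℂ A]

/-- For a symmetry `u`, `(1 - u) / 2` is the projection onto its `-1`-eigenspace, on which the
path turns the phase from `-1` to `1` while fixing the `1`-eigenspace: a unitary path from `u`
to `1`. -/
noncomputable def symmetryPath (u : A) : C(Set.Icc (0 : ℝ) 1, A) where
  toFun t := 1 + ((Circle.exp (π * (1 - t)) : ℂ) - 1) • (2⁻¹ : ℂ) • (1 - u)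
  continuous_toFun := by fun_prop

theorem symmetryPath_of_coe_eq_zero (u : A) {t : Set.Icc (0 : ℝ) 1} (ht : (t : ℝ) = 0) :
    symmetryPath u t = u := by
  simp only [symmetryPath, ContinuousMap.coe_mk, ht, sub_zero, mul_one,
    Circle.coe_exp, Complex.exp_pi_mul_I, smul_smul]
  norm_num

theorem symmetryPath_of_coe_eq_one (u : A) {t : Set.Icc (0 : ℝ) 1} (ht : (t : ℝ) = 1) :
    symmetryPath u t = 1 := by
  simp [symmetryPath, ht]

theorem symmetryPath_mem_unitary [StarRing A] [StarModule ℂ A] [ContinuousStar A] {u : A}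
    (hu : IsSelfAdjoint u) (hu2 : u * u = 1) : symmetryPath u ∈ unitary C(Set.Icc (0 : ℝ) 1, A) :=
  ContinuousMap.mem_unitary_iff.2 fun _ =>
    (hu.isStarProjection_half_smul_one_sub hu2).one_add_smul_mem_unitary (Circle.coe_mem_unitary _)

end SymmetryPath

theorem stmt_3 {B : Type*} [CStarAlgebra B]
    (ρ : Matrix (Fin 2) (Fin 2) ℂ →⋆ₐ[ℂ] B) :
    ∃ ρt : Matrix (Fin 2) (Fin 2) ℂ →⋆ₐ[ℂ]
        C(Set.Icc (0 : ℝ) 1, Matrix (Fin 2) (Fin 2) B),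
      ∀ x : Matrix (Fin 2) (Fin 2) ℂ,
        (∃ b : B, ρt x ⟨0, by constructor <;> norm_num⟩ = Matrix.diagonal (fun _ => b)) ∧
        (∃ y : Matrix (Fin 2) (Fin 2) ℂ,
          ρt x ⟨1, by constructor <;> norm_num⟩ = y.map (algebraMap ℂ B)) := by
  let W : unitary C(Set.Icc (0 : ℝ) 1, Matrix (Fin 2) (Fin 2) B) :=
    ⟨symmetryPath (tensorFlip ρ),
      symmetryPath_mem_unitary (isSelfAdjoint_tensorFlip ρ) (tensorFlip_mul_self ρ)⟩
  refine ⟨(StarAlgHom.ofId ℂ B).mapMatrix.conjUnitaryPath W, fun x => ⟨⟨ρ x, ?_⟩, ⟨x, ?_⟩⟩⟩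
  · rw [StarAlgHom.conjUnitaryPath_apply, symmetryPath_of_coe_eq_zero _ (by rfl),
      (isSelfAdjoint_tensorFlip ρ).star_eq]
    exact tensorFlip_mul_map_mul_tensorFlip ρ x
  · rw [StarAlgHom.conjUnitaryPath_apply, symmetryPath_of_coe_eq_one _ (by rfl), star_one,
      one_mul, mul_one]
    rfl
end

section
/- Let D and A be unital C*-algebras, let m ≥ 1, and let ι₁, …, ι_m : D → A be unital *-homomorphisms whose images pairwise commute (every element of ιᵢ(D) commutes with every element of ιⱼ(D) for i ≠ j). Let φ₀ : M₂(ℂ) → D be a completely positive contractive order zero map, and set h := φ₀(1_{M₂}). For k = 1, …, m define φ_k : M₂(ℂ) → A by φ_k(x) := (∏_{j=1}^{k-1} ιⱼ(1_D − h)) · ι_k(φ₀(x)). Then: (i) each φ_k is a completely positive contractive order zero map, and φ₁ = ι₁ ∘ φ₀; (ii) [φᵢ(M₂), φⱼ(M₂)] = 0 for i ≠ j; and (iii) 1_A − Σ_{k=1}^{m} φ_k(1_{M₂}) = ∏_{j=1}^{m} ιⱼ(1_D − h). (With A = D^{⊗m} and ιⱼ the j-th factor embedding, this is Proposition 2.4: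 φ_k = (1−h)^{⊗(k−1)} ⊗ φ₀ ⊗ 1^{⊗(m−k)} and 1 − Σφ_k(1) = (1−h)^{⊗m}.) -/
open scoped Matrix.Norms.L2Operator

/-- An element of a matrix algebra over a star ring is declared positive if it is of the form
`yᴴ * y`; in a C*-algebra this is exactly positivity. -/
def MatPos {R : Type*} [NonUnitalSemiring R] [StarRing R] {n : ℕ}
    (x : Matrix (Fin n) (Fin n) R) : Prop :=
  ∃ y : Matrix (Fin n) (Fin n) R, x = y.conjTranspose * y

/-- `φ : M_k(ℂ) → A` is a completely positive contractive order zero map. -/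
def IsCPCOrderZero {A : Type*} [NonUnitalNormedRing A] [StarRing A] [NormedSpace ℂ A]
    {k : ℕ} (φ : Matrix (Fin k) (Fin k) ℂ → A) : Prop :=
  IsLinearMap ℂ φ ∧
  (∀ (n : ℕ) (x : Matrix (Fin n) (Fin n) (Matrix (Fin k) (Fin k) ℂ)),
      MatPos x → MatPos (x.map φ)) ∧
  (∀ x, ‖φ x‖ ≤ ‖x‖) ∧
  (∀ x y : Matrix (Fin k) (Fin k) ℂ, MatPos x → MatPos y → x * y = 0 → φ x * φ y = 0)

/-!
`h = φ₀(1)` is a positive contraction commuting with the image of `φ₀`: for a star projection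
`p`, order zero gives `φ₀(p) φ₀(1 - p) = 0 = φ₀(1 - p) φ₀(p)`, so `φ₀(1) = φ₀(p) + φ₀(1 - p)`
commutes with `φ₀(p)`, and star projections span `M_k(ℂ)` by polarization. Hence
`P_k = ∏_{j<k} ιⱼ(1 - h)` is a positive contraction commuting with `ι_k(D)`, and cutting the
c.p.c. order zero map `ι_k ∘ φ₀` down by such an element keeps it c.p.c. order zero. All the
factors `ιⱼ(1 - h)`, `ιᵢ(φ₀ x)` involved pairwise commute, which gives (ii), and (iii) is the
telescoping sum of `P_k ι_k(h) = P_k - P_{k+1}`.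
-/

open scoped ComplexOrder

namespace Matrix

variable {n : Type*} [Fintype n]

lemma vecMulVec_star_mem_span_isStarProjection (v : n → ℂ) :
    vecMulVec v (star v) ∈ Submodule.span ℂ {p : Matrix n n ℂ | IsStarProjection p} := by
  set t := star v ⬝ᵥ v
  by_cases hv : v = 0
  · simp [hv]
  have ht : t ≠ 0 := fun h => hv (dotProduct_star_self_eq_zero.mp h)
  have ht_star : star t = t := (IsSelfAdjoint.of_nonneg (dotProduct_star_self_nonneg v)).star_eq
  have hproj : IsStarProjection (t⁻¹ • vecMulVec v (star v)) := by
    refine ⟨?_, ?_⟩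
    · rw [IsIdempotentElem, smul_mul_smul_comm, vecMulVec_mul_vecMulVec, vecMulVec_smul,
        smul_smul, mul_assoc, inv_mul_cancel₀ ht, mul_one]
    · rw [IsSelfAdjoint, star_smul, star_eq_conjTranspose, conjTranspose_vecMulVec, star_star,
        star_inv₀, ht_star]
  have := Submodule.smul_mem _ t (Submodule.subset_span hproj)
  rwa [smul_smul, mul_inv_cancel₀ ht, one_smul] at this

open Complex in
lemma vecMulVec_star_eq_polarization (u w : n → ℂ) :
    vecMulVec u (star w) = (4 : ℂ)⁻¹ •
      (vecMulVec (u + w) (star (u + w)) - vecMulVec (u - w) (star (u - w)) +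
        I • vecMulVec (u + I • w) (star (u + I • w)) -
        I • vecMulVec (u - I • w) (star (u - I • w))) := by
  ext i j
  simp only [vecMulVec_apply, sub_apply, add_apply, smul_apply, Pi.add_apply, Pi.sub_apply,
    Pi.star_apply, Pi.smul_apply, star_add, star_sub, star_smul, smul_eq_mul, RCLike.star_def,
    conj_I]
  linear_combination (u i * starRingEnd ℂ (w j) - w i * starRingEnd ℂ (u j)) / 2 * I_sq

theorem span_isStarProjection [DecidableEq n] :
    Submodule.span ℂ {p : Matrix n n ℂ | IsStarProjection p} = ⊤ := by
  have hrank_one : ∀ u w : n → ℂ, vecMulVec u (star w) ∈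
      Submodule.span ℂ {p : Matrix n n ℂ | IsStarProjection p} := fun u w => by
    rw [vecMulVec_star_eq_polarization]
    refine Submodule.smul_mem _ _ (Submodule.sub_mem _ (Submodule.add_mem _
      (Submodule.sub_mem _ ?_ ?_) (Submodule.smul_mem _ _ ?_)) (Submodule.smul_mem _ _ ?_)) <;>
    exact vecMulVec_star_mem_span_isStarProjection _
  refine Submodule.eq_top_iff'.mpr fun x => ?_
  rw [matrix_eq_sum_single x]
  refine Submodule.sum_mem _ fun i _ => Submodule.sum_mem _ fun j _ => ?_
  have hsingle : single i j (x i j) = x i j • vecMulVec (Pi.single i 1) (star (Pi.single j 1)) := by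
    rw [Pi.star_single, star_one, ← single_eq_single_vecMulVec_single, smul_single, smul_eq_mul,
      mul_one]
  exact hsingle ▸ Submodule.smul_mem _ _ (hrank_one _ _)

end Matrix

lemma IsStarProjection.matPos {R : Type*} [NonUnitalSemiring R] [StarRing R] {n : ℕ}
    {p : Matrix (Fin n) (Fin n) R} (hp : IsStarProjection p) : MatPos p :=
  ⟨p, by rw [← Matrix.star_eq_conjTranspose, hp.isSelfAdjoint.star_eq, hp.isIdempotentElem.eq]⟩

attribute [local instance] CStarAlgebra.spectralOrder CStarAlgebra.spectralOrderedRing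

lemma CStarRing.norm_one_le {R : Type*} [NormedRing R] [StarRing R] [CStarRing R] :
    ‖(1 : R)‖ ≤ 1 := by
  nontriviality R
  exact CStarRing.norm_one.le

namespace IsCPCOrderZero

variable {D A : Type*} [CStarAlgebra D] [CStarAlgebra A] {k : ℕ}
  {φ : Matrix (Fin k) (Fin k) ℂ → D}

lemma nonneg_of_matPos (hφ : IsCPCOrderZero φ) {x : Matrix (Fin k) (Fin k) ℂ} (hx : MatPos x) :
    0 ≤ φ x := by
  obtain ⟨y, hy⟩ := hx
  obtain ⟨z, hz⟩ := hφ.2.1 1 (Matrix.of ![![x]]) ⟨Matrix.of ![![y]], by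
    ext i j; fin_cases i; fin_cases j; simp [Matrix.mul_apply, hy, Matrix.star_eq_conjTranspose]⟩
  have : φ x = star (z 0 0) * z 0 0 := by
    simpa [Matrix.mul_apply] using congr_fun₂ hz 0 0
  exact this ▸ star_mul_self_nonneg _

lemma commute_map_one_of_isStarProjection (hφ : IsCPCOrderZero φ)
    {p : Matrix (Fin k) (Fin k) ℂ} (hp : IsStarProjection p) : Commute (φ 1) (φ p) := by
  have hsplit : φ 1 = φ p + φ (1 - p) := by rw [← hφ.1.map_add, add_sub_cancel]
  have h₁ : φ p * φ (1 - p) = 0 := hφ.2.2.2 _ _ hp.matPos hp.one_sub.matPos hp.mul_one_sub_self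
  have h₂ : φ (1 - p) * φ p = 0 := hφ.2.2.2 _ _ hp.one_sub.matPos hp.matPos hp.one_sub_mul_self
  rw [Commute, SemiconjBy, hsplit, add_mul, mul_add, h₁, h₂]

lemma commute_map_one (hφ : IsCPCOrderZero φ) (x : Matrix (Fin k) (Fin k) ℂ) :
    Commute (φ 1) (φ x) := by
  have hx : x ∈ Submodule.span ℂ {p : Matrix (Fin k) (Fin k) ℂ | IsStarProjection p} := by
    rw [Matrix.span_isStarProjection]; trivial
  induction hx using Submodule.span_induction with
  | mem p hp => exact hφ.commute_map_one_of_isStarProjection hp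
  | zero => simp [hφ.1.map_zero]
  | add x y _ _ hx hy => rw [hφ.1.map_add]; exact hx.add_right hy
  | smul c x _ hx => rw [hφ.1.map_smul]; exact hx.smul_right c

lemma nonneg_map_one (hφ : IsCPCOrderZero φ) : 0 ≤ φ 1 :=
  hφ.nonneg_of_matPos (IsStarProjection.one _).matPos

lemma norm_map_one_le (hφ : IsCPCOrderZero φ) : ‖φ 1‖ ≤ 1 :=
  (hφ.2.2.1 1).trans CStarRing.norm_one_le

/-- Commutation of `c` with all of `ι(D)`, not only with the image of `φ`, is what lets `√c` pass
through a factorization `[φ(xᵢⱼ)] = yᴴ y` over `D` of an amplified positive matrix. -/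
lemma mul_starAlgHom_comp (hφ : IsCPCOrderZero φ) (ι : D →⋆ₐ[ℂ] A) {c : A} (hc₀ : 0 ≤ c)
    (hc₁ : ‖c‖ ≤ 1) (hcomm : ∀ d, Commute c (ι d)) : IsCPCOrderZero fun x => c * ι (φ x) := by
  obtain ⟨hlin, hcp, hcontr, hoz⟩ := hφ
  refine ⟨⟨fun x y => ?_, fun r x => ?_⟩, fun n x hx => ?_, fun x => ?_, fun x y hx hy hxy => ?_⟩
  · rw [hlin.map_add, map_add, mul_add]
  · rw [hlin.map_smul, map_smul, mul_smul_comm]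
  · obtain ⟨y, hy⟩ := hcp n x hx
    set g := CFC.sqrt c
    have hg : IsSelfAdjoint g := (CFC.sqrt_nonneg c).isSelfAdjoint
    have hgg : g * g = c := CFC.sqrt_mul_sqrt_self c hc₀
    have hgcomm : ∀ d, Commute g (ι d) := fun d => by
      rw [show g = cfc NNReal.sqrt c from CFC.sqrt_eq_cfc]; exact (hcomm d).cfc_nnreal _
    have hsummand : ∀ a b : D, star (g * ι a) * (g * ι b) = c * ι (star a * b) := fun a b => by
      rw [star_mul, hg.star_eq, ← map_star, ← (hgcomm _).eq, (hgcomm _).symm.mul_mul_mul_comm,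
        hgg, map_mul]
    have hyij : ∀ i j, φ (x i j) = ∑ l, star (y l i) * y l j := fun i j => by
      simpa [Matrix.mul_apply] using congr_fun₂ hy i j
    refine ⟨y.map fun d => g * ι d, ?_⟩
    ext i j
    simp only [Matrix.map_apply, Matrix.mul_apply, Matrix.conjTranspose_apply, hyij, map_sum,
      Finset.mul_sum, hsummand]
  · calc ‖c * ι (φ x)‖ ≤ ‖c‖ * ‖ι (φ x)‖ := norm_mul_le _ _
      _ ≤ 1 * ‖x‖ := by
        gcongr
        exact (NonUnitalStarAlgHom.norm_apply_le ι _).trans (hcontr x)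
      _ = ‖x‖ := one_mul _
  · rw [(hcomm _).symm.mul_mul_mul_comm, ← map_mul, hoz x y hx hy hxy, map_zero, mul_zero]

lemma one_sub_map_one_nonneg (hφ : IsCPCOrderZero φ) : 0 ≤ 1 - φ 1 :=
  sub_nonneg.mpr <|
    (CStarAlgebra.norm_le_one_iff_of_nonneg _ hφ.nonneg_map_one).mp hφ.norm_map_one_le

lemma norm_one_sub_map_one_le (hφ : IsCPCOrderZero φ) : ‖1 - φ 1‖ ≤ 1 :=
  (CStarAlgebra.norm_le_one_iff_of_nonneg _ hφ.one_sub_map_one_nonneg).mpr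
    (sub_le_self _ hφ.nonneg_map_one)

lemma commute_one_sub_map_one (hφ : IsCPCOrderZero φ) (x : Matrix (Fin k) (Fin k) ℂ) :
    Commute (1 - φ 1) (φ x) :=
  (Commute.one_left _).sub_left (hφ.commute_map_one x)

end IsCPCOrderZero

section Products

variable {κ : Type*}

lemma Finset.noncommProd_nonneg_s6 {A : Type*} [CStarAlgebra A] (s : Finset κ) (f : κ → A) (comm)
    (hf : ∀ i ∈ s, 0 ≤ f i) : 0 ≤ s.noncommProd f comm := by
  classical
  induction s using Finset.induction_on with
  | empty => simp
  | insert a s ha ih =>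
    rw [Finset.noncommProd_insert_of_notMem _ _ _ _ ha]
    refine Commute.mul_nonneg (hf a (s.mem_insert_self a))
      (ih _ fun i hi => hf i (Finset.mem_insert_of_mem hi)) ?_
    exact Finset.noncommProd_commute _ _ _ _ fun i hi =>
      comm (s.mem_insert_self a) (Finset.mem_insert_of_mem hi) (ne_of_mem_of_not_mem hi ha).symm

lemma Finset.norm_noncommProd_le_one {R : Type*} [NormedRing R] [StarRing R] [CStarRing R]
    (s : Finset κ) (f : κ → R) (comm) (hf : ∀ i ∈ s, ‖f i‖ ≤ 1) :
    ‖s.noncommProd f comm‖ ≤ 1 := by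
  classical
  induction s using Finset.induction_on with
  | empty => simpa using CStarRing.norm_one_le
  | insert a s ha ih =>
    rw [Finset.noncommProd_insert_of_notMem _ _ _ _ ha]
    refine (norm_mul_le _ _).trans ?_
    exact mul_le_one₀ (hf a (s.mem_insert_self a)) (norm_nonneg _)
      (ih _ fun i hi => hf i (Finset.mem_insert_of_mem hi))

theorem Fin.sum_noncommProd_Iio_mul_one_sub {R : Type*} [Ring R] {m : ℕ} (f : Fin m → R)
    (hf : Pairwise fun i j => Commute (f i) (f j)) :
    ∑ k, (Finset.Iio k).noncommProd f (fun _ _ _ _ hij => hf hij) * (1 - f k) =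
      1 - Finset.univ.noncommProd f (fun _ _ _ _ hij => hf hij) := by
  classical
  let F : ℕ → R := fun t =>
    (Finset.univ.filter fun j : Fin m => (j : ℕ) < t).noncommProd f (fun _ _ _ _ hij => hf hij)
  have hF_zero : F 0 = 1 := by simp [F]
  have hF_m : F m = Finset.univ.noncommProd f (fun _ _ _ _ hij => hf hij) := by simp [F]
  have hF_Iio : ∀ k : Fin m, (Finset.Iio k).noncommProd f (fun _ _ _ _ hij => hf hij) = F k := by
    intro k
    congr 1
    ext j
    simp
  have hF_succ : ∀ k : Fin m, F (k + 1) = F k * f k := by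
    intro k
    have hset : (Finset.univ.filter fun j : Fin m => (j : ℕ) < k + 1) =
        insert k (Finset.univ.filter fun j : Fin m => (j : ℕ) < k) := by
      ext j
      simp only [Finset.mem_filter, Finset.mem_univ, true_and, Finset.mem_insert, Fin.ext_iff]
      omega
    exact (Finset.noncommProd_congr hset (fun _ _ => rfl) _).trans
      (Finset.noncommProd_insert_of_notMem' _ _ _ _ (by simp))
  calc ∑ k, (Finset.Iio k).noncommProd f _ * (1 - f k) = ∑ k : Fin m, (F k - F (k + 1)) := by
        simp only [hF_Iio, hF_succ, mul_sub, mul_one]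
    _ = ∑ t ∈ Finset.range m, (F t - F (t + 1)) :=
      Fin.sum_univ_eq_sum_range (fun t => F t - F (t + 1)) m
    _ = 1 - Finset.univ.noncommProd f _ := by rw [Finset.sum_range_sub', hF_zero, hF_m]

variable {D A F : Type*} [Monoid D] [Monoid A] [FunLike F D A] [MulHomClass F D A]

lemma commute_apply_of_commute (ι : κ → F)
    (hcomm : ∀ i j, i ≠ j → ∀ x y, Commute (ι i x) (ι j y)) {x y : D} (hxy : Commute x y)
    (i j : κ) : Commute (ι i x) (ι j y) := by
  obtain rfl | hij := eq_or_ne i j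
  · exact hxy.map (ι i)
  · exact hcomm i j hij x y

lemma commute_noncommProd_mul_apply (ι : κ → F)
    (hcomm : ∀ i j, i ≠ j → ∀ x y, Commute (ι i x) (ι j y)) {w a b : D} (ha : Commute w a)
    (hb : Commute w b) (s t : Finset κ) {i j : κ} (hij : i ≠ j) :
    Commute (s.noncommProd (fun l => ι l w) (fun p _ q _ hpq => hcomm p q hpq _ _) * ι i a)
      (t.noncommProd (fun l => ι l w) (fun p _ q _ hpq => hcomm p q hpq _ _) * ι j b) := by
  have hw : ∀ l l', Commute (ι l w) (ι l' w) := commute_apply_of_commute ι hcomm (.refl w)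
  refine .mul_left (.mul_right ?_ ?_) (.mul_right ?_ (hcomm i j hij a b))
  · exact Finset.noncommProd_commute _ _ _ _ fun l _ =>
      (Finset.noncommProd_commute _ _ _ _ fun l' _ => hw l l').symm
  · exact (Finset.noncommProd_commute _ _ _ _ fun l _ =>
      commute_apply_of_commute ι hcomm hb.symm j l).symm
  · exact Finset.noncommProd_commute _ _ _ _ fun l _ =>
      commute_apply_of_commute ι hcomm ha.symm i l

end Products

theorem stmt_6 {D A : Type*} [CStarAlgebra D] [CStarAlgebra A]
    (m : ℕ) (hm : 1 ≤ m)
    (ι : Fin m → (D →⋆ₐ[ℂ] A))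
    (hcomm : ∀ i j, i ≠ j → ∀ x y : D, Commute (ι i x) (ι j y))
    (φ₀ : Matrix (Fin 2) (Fin 2) ℂ → D) (hφ₀ : IsCPCOrderZero φ₀)
    (h : D) (hh : h = φ₀ 1)
    (φ : Fin m → (Matrix (Fin 2) (Fin 2) ℂ → A))
    (hφ : ∀ k x, φ k x =
      (Finset.Iio k).noncommProd (fun j => ι j (1 - h))
        (fun p _ q _ hpq => hcomm p q hpq _ _) * ι k (φ₀ x)) :
    (∀ k, IsCPCOrderZero (φ k)) ∧
    (∀ x, φ ⟨0, by omega⟩ x = ι ⟨0, by omega⟩ (φ₀ x)) ∧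
    (∀ i j, i ≠ j → ∀ x y, Commute (φ i x) (φ j y)) ∧
    1 - ∑ k, φ k 1 =
      Finset.univ.noncommProd (fun j => ι j (1 - h))
        (fun p _ q _ hpq => hcomm p q hpq _ _) := by
  subst hh
  refine ⟨fun k => ?_, fun x => ?_, fun i j hij x y => ?_, ?_⟩
  · have hP_comm : ∀ d, Commute ((Finset.Iio k).noncommProd (fun j => ι j (1 - φ₀ 1))
        (fun p _ q _ hpq => hcomm p q hpq _ _)) (ι k d) := fun d =>
      (Finset.noncommProd_commute _ _ _ _ fun j hj =>
        (hcomm j k (Finset.mem_Iio.mp hj).ne _ _).symm).symm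
    rw [show φ k = _ from funext (hφ k)]
    exact hφ₀.mul_starAlgHom_comp (ι k)
      (Finset.noncommProd_nonneg_s6 _ _ _ fun j _ => map_nonneg _ hφ₀.one_sub_map_one_nonneg)
      (Finset.norm_noncommProd_le_one _ _ _ fun j _ =>
        (NonUnitalStarAlgHom.norm_apply_le _ _).trans hφ₀.norm_one_sub_map_one_le)
      hP_comm
  · have hIio : Finset.Iio (⟨0, by omega⟩ : Fin m) = ∅ := by ext j; simp [Fin.lt_def]
    simp [hφ, hIio]
  · rw [hφ, hφ]
    exact commute_noncommProd_mul_apply ι hcomm (hφ₀.commute_one_sub_map_one x)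
      (hφ₀.commute_one_sub_map_one y) _ _ hij
  · have hφ_one : ∀ k, φ k 1 = (Finset.Iio k).noncommProd (fun j => ι j (1 - φ₀ 1))
        (fun p _ q _ hpq => hcomm p q hpq _ _) * (1 - ι k (1 - φ₀ 1)) := fun k => by
      rw [hφ, map_sub, map_one, sub_sub_cancel]
    simp only [hφ_one]
    rw [Fin.sum_noncommProd_Iio_mul_one_sub (fun j => ι j (1 - φ₀ 1))
      (fun i j hij => hcomm i j hij _ _), sub_sub_cancel]
end
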